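/- Let n ≥ 1 and let X be the pushout in SSet of the boundary inclusion ∂Δ[n] ⟶ Δ[n] along the unique map ∂Δ[n] ⟶ Δ[0] (so X is the model Δ[n]/∂Δ[n] of the n-sphere). Then every simplicial map from X to a non-singular simplicial set factors uniquely through the unique map X ⟶ Δ[0]; i.e., for every non-singular A and every k : X ⟶ A there is a unique k̄ : Δ[0] ⟶ A with k = k̄ ∘ (X ⟶ Δ[0]). In other words, the desingularization of Δ[n]/∂Δ[n] is Δ[0]. -/

import Mathlib

open CategoryTheory CategoryTheory.Limits Simplicial SSet

/-- The `i`-th vertex of an `n`-simplex `x`, i.e. `x · εᵢ`, where `εᵢ : [0] ⟶ [n]`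
sends `0` to `i`. -/
def SSet.vertex (X : SSet) {n : ℕ} (x : X _⦋n⦌) (i : Fin (n + 1)) : X _⦋0⦌ :=
  X.map (SimplexCategory.const ⦋0⦌ ⦋n⦌ i).op x

/-- A simplex is degenerate if it is obtained from a simplex of strictly lower degree
by the action of a (necessarily non-identity) epimorphism of the simplex category. -/
def SSet.IsDegenerate (X : SSet) {n : ℕ} (x : X _⦋n⦌) : Prop :=
  ∃ (m : ℕ) (_ : m < n) (σ : (⦋n⦌ : SimplexCategory) ⟶ ⦋m⦌) (y : X _⦋m⦌),
    Epi σ ∧ x = X.map σ.op y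

/-- A simplicial set is non-singular if the representing map of each of its
non-degenerate simplices is a monomorphism. -/
def SSet.NonSingular (X : SSet) : Prop :=
  ∀ (n : ℕ) (x : X _⦋n⦌), ¬ X.IsDegenerate x → Mono (((SSet.yonedaEquiv (X := X) (n := ⦋n⦌)).symm x))

/-- The relation `≈ₓ` on `Fin (n + 1)`: `i ≈ₓ k` iff there exists `j` with
`i ≤ k`, `k ≤ j` and `x·εᵢ = x·εⱼ`. -/
def SSet.approxRel (X : SSet) {n : ℕ} (x : X _⦋n⦌) (i k : Fin (n + 1)) : Prop :=
  ∃ j, i ≤ k ∧ k ≤ j ∧ X.vertex x i = X.vertex x j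

/-- The equivalence relation `Rₓ` generated by `≈ₓ`. -/
def SSet.vertexRel (X : SSet) {n : ℕ} (x : X _⦋n⦌) : Fin (n + 1) → Fin (n + 1) → Prop :=
  Relation.EqvGen (X.approxRel x)

instance Δ0_subsingleton (m : SimplexCategoryᵒᵖ) : Subsingleton (Δ[0].obj m) :=
  (SSet.stdSimplex.objEquiv (n := ⦋0⦌) (m := m)).subsingleton

/-- The unique map to the standard `0`-simplex, which is terminal in `SSet`. -/
def SSet.toPt (Y : SSet.{0}) : Y ⟶ Δ[0] where
  app m := TypeCat.ofHom fun _ => SSet.stdSimplex.const 0 0 m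
  naturality _ _ _ := by ext; exact Subsingleton.elim _ _

/-! Every vertex of `Δ[n]` lies in `∂Δ[n]` when `n ≥ 1`, so the image in `A` of the top simplex
of `Δ[n]` has all its vertices equal. In a non-singular simplicial set such a simplex is a
degeneracy of a vertex: write it as a degeneracy of a non-degenerate simplex `y`; if `y` had
positive dimension, its representing map would be a monomorphism identifying two distinct
vertices. Hence `k` is constant, and the factorization is unique because `pushout.inr` is a
section of the map to `Δ[0]`. -/

namespace SSet

variable {X : SSet}

lemma isDegenerate_iff_mem_degenerate {n : ℕ} (x : X _⦋n⦌) :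
    X.IsDegenerate x ↔ x ∈ X.degenerate n := by
  rw [mem_degenerate_iff]
  constructor
  · rintro ⟨m, hm, σ, y, hσ, rfl⟩
    exact ⟨m, hm, σ, hσ, y, rfl⟩
  · rintro ⟨m, hm, σ, hσ, y, rfl⟩
    exact ⟨m, hm, σ, y, hσ, rfl⟩

lemma NonSingular.nonsingular (hX : X.NonSingular) : X.Nonsingular where
  mono x := hX _ x.1 fun h => x.2 ((isDegenerate_iff_mem_degenerate _).1 h)

lemma vertex_map {m n : ℕ} (σ : ⦋m⦌ ⟶ ⦋n⦌) (y : X _⦋n⦌) (i : Fin (m + 1)) :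
    X.vertex (X.map σ.op y) i = X.vertex y (σ.toOrderHom i) := by
  rw [vertex, vertex, ← Functor.map_comp_apply, ← op_comp, SimplexCategory.const_comp]

lemma vertex_zero (x : X _⦋0⦌) : X.vertex x 0 = x := by
  rw [vertex, SimplexCategory.const_eq_id, op_id, Functor.map_id_apply]

lemma Nonsingular.eq_map_const_of_vertex_eq [X.Nonsingular] {n : ℕ} (x : X _⦋n⦌)
    (hx : ∀ i j, X.vertex x i = X.vertex x j) :
    x = X.map (SimplexCategory.const ⦋n⦌ ⦋0⦌ 0).op (X.vertex x 0) := by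
  obtain ⟨m, σ, hσ, ⟨y, hy⟩, rfl⟩ := X.exists_nonDegenerate x
  obtain rfl | hm := Nat.eq_zero_or_pos m
  · rw [vertex_map, Subsingleton.elim (α := Fin 1) (σ.toOrderHom 0) 0, vertex_zero,
      SimplexCategory.eq_const_to_zero σ]
  · exfalso
    have hsurj := SimplexCategory.epi_iff_surjective.1 hσ
    obtain ⟨a, ha⟩ := hsurj 0
    obtain ⟨b, hb⟩ := hsurj (Fin.last m)
    have hab := hx a b
    rw [vertex_map, vertex_map, ha, hb] at hab
    have h0last : (0 : Fin (m + 1)) = Fin.last m :=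
      congr_arg (fun f => f.toOrderHom 0) (Nonsingular.injective_map y hy hab)
    exact hm.ne (congr_arg Fin.val h0last)

lemma Nonsingular.eq_comp_of_vertex_eq [X.Nonsingular] {n : ℕ} (f : Δ[n] ⟶ X)
    (v : Δ[0] ⟶ X) (t : Δ[n] ⟶ Δ[0])
    (hf : ∀ i, SSet.stdSimplex.map (SimplexCategory.const ⦋0⦌ ⦋n⦌ i) ≫ f = v) :
    f = t ≫ v := by
  have hvertex (i : Fin (n + 1)) : X.vertex (yonedaEquiv f) i = yonedaEquiv v := by
    rw [vertex, yonedaEquiv_naturality, hf]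
  apply yonedaEquiv.injective
  rw [eq_map_const_of_vertex_eq (yonedaEquiv f) fun i j => by rw [hvertex, hvertex], hvertex,
    yonedaEquiv_naturality, stdSimplex.ext₀ (f := t)]

lemma stdSimplex_map_const_comp_pushout_inl {n : ℕ} (hn : 1 ≤ n) (g : (∂Δ[n] : SSet) ⟶ Δ[0])
    (i : Fin (n + 1)) :
    SSet.stdSimplex.map (SimplexCategory.const ⦋0⦌ ⦋n⦌ i) ≫ pushout.inl (boundary n).ι g =
      pushout.inr (boundary n).ι g := by
  have hle :
      Subcomplex.range (SSet.stdSimplex.map (SimplexCategory.const ⦋0⦌ ⦋n⦌ i)) ≤ ∂Δ[n] := by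
    rw [Subcomplex.range_eq_ofSimplex, Subcomplex.ofSimplex_le_iff, boundary_obj_eq_univ 0 n]
    trivial
  rw [← Subcomplex.lift_ι _ hle, Category.assoc, pushout.condition, ← Category.assoc,
    stdSimplex.ext₀ (f := _ ≫ g) (g := 𝟙 _), Category.id_comp]

end SSet

/-- Every map from `Δ[n]/∂Δ[n]` (with `n ≥ 1`) to a non-singular simplicial set
factors uniquely through the unique map to `Δ[0]`: the desingularization of
`Δ[n]/∂Δ[n]` is `Δ[0]`. -/
theorem desingularization_sphere (n : ℕ) (hn : 1 ≤ n) (A : SSet.{0}) (hA : A.NonSingular)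
    (k : pushout ((SSet.boundary n).ι) (SSet.toPt ∂Δ[n]) ⟶ A) :
    ∃! kbar : Δ[0] ⟶ A,
      k = SSet.toPt (pushout ((SSet.boundary n).ι) (SSet.toPt ∂Δ[n])) ≫ kbar := by
  have : A.Nonsingular := hA.nonsingular
  have hinr : pushout.inr _ _ ≫ toPt (pushout (boundary n).ι (toPt ∂Δ[n])) = 𝟙 Δ[0] :=
    stdSimplex.ext₀
  refine ⟨pushout.inr _ _ ≫ k, pushout.hom_ext ?_ ?_, fun kbar hk => ?_⟩
  · rw [← Category.assoc]
    exact Nonsingular.eq_comp_of_vertex_eq _ _ _ fun i => by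
      rw [← Category.assoc, stdSimplex_map_const_comp_pushout_inl hn]
  · rw [← Category.assoc, hinr, Category.id_comp]
  · rw [hk, ← Category.assoc, hinr, Category.id_comp]
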